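/- Let T be a positively edge-weighted tree with leaf set X and square root embedding Ψ. Suppose X_1 | X_2 is a bipartition of X induced by deleting an edge e of T. Then for all x_1, x_2 ∈ X_1 and x_3, x_4 ∈ X_2, (Ψ(x_1) - Ψ(x_2)) · (Ψ(x_3) - Ψ(x_4)) = 0 and (Ψ(x_1) - Ψ(x_3)) · (Ψ(x_2) - Ψ(x_4)) ≥ w(e) > 0. -/

import Mathlib

/-!
The coordinate of `Ψ_v a - Ψ_v b` at an edge `f` is `±√(w f)` when `f` separates `a` from `b`
and `0` otherwise: deleting an edge from a tree leaves two components, and `f` lies on the path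
from `v` to `u` exactly when it separates `v` from `u`. No edge separates both `x₁` from `x₂` and
`x₃` from `x₄`, because a walk from `x₁` to `x₂` and one from `x₃` to `x₄` can be chosen in
different components of `T - e`. Hence the first inner product vanishes termwise, while every term
of the second is nonnegative and the term at `e` equals `w e`.
-/

open SimpleGraph

/-- The unique path between two vertices of a tree, as a walk. -/
noncomputable def treePath {V : Type*} (G : SimpleGraph V) (hG : G.IsTree) (a b : V) :
    G.Walk a b :=
  (hG.existsUnique_path a b).choose

/-- The square root embedding with base node `v`: the coordinate of `Ψ_v u` at edge `e`
is `√(w e)` if `e` lies on the path from `v` to `u`, and `0` otherwise. -/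
noncomputable def sqrtEmbed {V : Type*} [DecidableEq V] (G : SimpleGraph V) (hG : G.IsTree)
    [Fintype G.edgeSet] (w : Sym2 V → ℝ) (v u : V) : EuclideanSpace ℝ G.edgeSet :=
  WithLp.toLp 2 (fun e => if (e : Sym2 V) ∈ (treePath G hG v u).edges then Real.sqrt (w e) else 0)

/-- The tree metric: sum of the weights of the edges on the unique path. -/
noncomputable def treeDist {V : Type*} (G : SimpleGraph V) (hG : G.IsTree)
    (w : Sym2 V → ℝ) (a b : V) : ℝ :=
  ((treePath G hG a b).edges.map w).sum

namespace SimpleGraph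

variable {V : Type*} {G : SimpleGraph V}

lemma reachable_deleteEdges_or_reachable_deleteEdges {e f : Sym2 V} {a b c d : V}
    (hab : (G.deleteEdges {e}).Reachable a b) (hcd : (G.deleteEdges {e}).Reachable c d)
    (hac : ¬ (G.deleteEdges {e}).Reachable a c) :
    (G.deleteEdges {f}).Reachable a b ∨ (G.deleteEdges {f}).Reachable c d := by
  classical
  by_contra! h
  obtain ⟨p⟩ := hab
  obtain ⟨q⟩ := hcd
  have hle : (G.deleteEdges {e}).deleteEdges {f} ≤ G.deleteEdges {f} :=
    deleteEdges_mono (deleteEdges_le _)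
  have hfp := p.mem_edges_of_not_reachable_deleteEdges fun r => h.1 (r.mono hle)
  have hfq := q.mem_edges_of_not_reachable_deleteEdges fun r => h.2 (r.mono hle)
  induction f using Sym2.ind with
  | _ x _ =>
    exact hac <| (p.takeUntil x (p.fst_mem_support_of_mem_edges hfp)).reachable.trans
      (q.takeUntil x (q.fst_mem_support_of_mem_edges hfq)).reachable.symm

lemma Preconnected.reachable_deleteEdges_or (hG : G.Preconnected) (x y u : V) :
    (G.deleteEdges {s(x, y)}).Reachable u x ∨ (G.deleteEdges {s(x, y)}).Reachable u y := by
  classical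
  obtain ⟨P, hP⟩ := hG.exists_isPath u x
  by_cases hxy : s(x, y) ∈ P.edges
  · have hy := P.snd_mem_support_of_mem_edges hxy
    have hx := Walk.endpoint_notMem_support_takeUntil hP hy (P.adj_of_mem_edges hxy).ne
    refine .inr ⟨(P.takeUntil y hy).toDeleteEdges {s(x, y)} fun f hf hfxy => hx ?_⟩
    rw [Set.mem_singleton_iff.mp hfxy] at hf
    exact (P.takeUntil y hy).fst_mem_support_of_mem_edges hf
  · exact .inl ⟨P.toDeleteEdges {s(x, y)} fun f hf hfxy =>
      hxy (Set.mem_singleton_iff.mp hfxy ▸ hf)⟩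

/-- Deleting an edge from a connected graph leaves at most two components. -/
lemma Preconnected.reachable_deleteEdges_iff (hG : G.Preconnected) (f : Sym2 V) (v a b : V) :
    (G.deleteEdges {f}).Reachable a b ↔
      ((G.deleteEdges {f}).Reachable v a ↔ (G.deleteEdges {f}).Reachable v b) := by
  refine ⟨fun hab => ⟨(·.trans hab), (·.trans hab.symm)⟩, fun h => ?_⟩
  induction f using Sym2.ind with
  | _ x y =>
    have := hG.reachable_deleteEdges_or x y v
    have := hG.reachable_deleteEdges_or x y a
    have := hG.reachable_deleteEdges_or x y b
    grind [Reachable.trans, Reachable.symm]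

end SimpleGraph

section Tree

variable {V : Type*} {G : SimpleGraph V}

lemma treePath_eq_of_isPath (hG : G.IsTree) {a b : V} {p : G.Walk a b} (hp : p.IsPath) :
    treePath G hG a b = p :=
  ((hG.existsUnique_path a b).choose_spec.2 p hp).symm

lemma mem_edges_treePath_iff (hG : G.IsTree) {f : Sym2 V} {a b : V} :
    f ∈ (treePath G hG a b).edges ↔ ¬ (G.deleteEdges {f}).Reachable a b := by
  refine ⟨fun hf ⟨p⟩ => ?_, (treePath G hG a b).mem_edges_of_not_reachable_deleteEdges⟩
  classical
  have hp : (p.toPath.val.mapLe (deleteEdges_le _)).IsPath := p.toPath.2.mapLe _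
  rw [treePath_eq_of_isPath hG hp, Walk.edges_mapLe_eq_edges] at hf
  simpa using (p.toPath.val).edges_subset_edgeSet hf

end Tree

section SqrtEmbedding

variable {V : Type*} [DecidableEq V] {G : SimpleGraph V}

noncomputable def treePathIndicator (hG : G.IsTree) (v u : V) (f : Sym2 V) : ℝ :=
  if f ∈ (treePath G hG v u).edges then 1 else 0

lemma treePathIndicator_eq_iff (hG : G.IsTree) (v a b : V) (f : Sym2 V) :
    treePathIndicator hG v a f = treePathIndicator hG v b f ↔
      (G.deleteEdges {f}).Reachable a b := by
  have ha := mem_edges_treePath_iff hG (f := f) (a := v) (b := a)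
  have hb := mem_edges_treePath_iff hG (f := f) (a := v) (b := b)
  rw [hG.connected.preconnected.reachable_deleteEdges_iff f v]
  unfold treePathIndicator
  split_ifs <;> simp_all

lemma treePathIndicator_sub_mul_sub_nonneg (hG : G.IsTree) {v a b c d : V} {f : Sym2 V}
    (h : treePathIndicator hG v a f = treePathIndicator hG v b f ∨
      treePathIndicator hG v c f = treePathIndicator hG v d f) :
    0 ≤ (treePathIndicator hG v a f - treePathIndicator hG v c f) *
      (treePathIndicator hG v b f - treePathIndicator hG v d f) := by
  simp only [treePathIndicator] at h ⊢
  split_ifs at h ⊢ <;> norm_num at *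

lemma treePathIndicator_sub_mul_sub_eq_one (hG : G.IsTree) {v a b c d : V} {f : Sym2 V}
    (hab : treePathIndicator hG v a f = treePathIndicator hG v b f)
    (hcd : treePathIndicator hG v c f = treePathIndicator hG v d f)
    (hac : treePathIndicator hG v a f ≠ treePathIndicator hG v c f) :
    (treePathIndicator hG v a f - treePathIndicator hG v c f) *
      (treePathIndicator hG v b f - treePathIndicator hG v d f) = 1 := by
  simp only [treePathIndicator] at hab hcd hac ⊢
  split_ifs at hab hcd hac ⊢ <;> norm_num at *

variable [Fintype G.edgeSet]

lemma sqrtEmbed_apply (hG : G.IsTree) (w : Sym2 V → ℝ) (v u : V) (f : G.edgeSet) :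
    sqrtEmbed G hG w v u f = √(w f) * treePathIndicator hG v u f := by
  simp [sqrtEmbed, treePathIndicator]

open RealInnerProductSpace in
lemma inner_sqrtEmbed_sub_sqrtEmbed (hG : G.IsTree) {w : Sym2 V → ℝ}
    (hw : ∀ f ∈ G.edgeSet, 0 ≤ w f) (v a b c d : V) :
    ⟪sqrtEmbed G hG w v a - sqrtEmbed G hG w v b, sqrtEmbed G hG w v c - sqrtEmbed G hG w v d⟫ =
      ∑ f : G.edgeSet, w f * ((treePathIndicator hG v a f - treePathIndicator hG v b f) *
        (treePathIndicator hG v c f - treePathIndicator hG v d f)) := by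
  simp only [PiLp.inner_apply, PiLp.sub_apply, sqrtEmbed_apply, RCLike.inner_apply, conj_trivial]
  refine Finset.sum_congr rfl fun f _ => ?_
  linear_combination (treePathIndicator hG v a f - treePathIndicator hG v b f) *
    (treePathIndicator hG v c f - treePathIndicator hG v d f) * Real.mul_self_sqrt (hw f f.2)

end SqrtEmbedding

open RealInnerProductSpace in
theorem sqrtEmbed_split_general {V : Type*} [DecidableEq V] (G : SimpleGraph V) (hG : G.IsTree)
    [Fintype G.edgeSet] (w : Sym2 V → ℝ) (hw : ∀ e ∈ G.edgeSet, 0 < w e)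
    (v : V) (e : Sym2 V) (he : e ∈ G.edgeSet) (X₁ X₂ : Set V)
    (hX₁ : ∀ a ∈ X₁, ∀ b ∈ X₁, (G.deleteEdges {e}).Reachable a b)
    (hX₂ : ∀ a ∈ X₂, ∀ b ∈ X₂, (G.deleteEdges {e}).Reachable a b)
    (hsep : ∀ a ∈ X₁, ∀ b ∈ X₂, ¬ (G.deleteEdges {e}).Reachable a b) :
    ∀ x₁ ∈ X₁, ∀ x₂ ∈ X₁, ∀ x₃ ∈ X₂, ∀ x₄ ∈ X₂,
      ⟪sqrtEmbed G hG w v x₁ - sqrtEmbed G hG w v x₂,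
        sqrtEmbed G hG w v x₃ - sqrtEmbed G hG w v x₄⟫ = 0 ∧
      w e ≤ ⟪sqrtEmbed G hG w v x₁ - sqrtEmbed G hG w v x₃,
              sqrtEmbed G hG w v x₂ - sqrtEmbed G hG w v x₄⟫ ∧
      0 < w e := by
  intro x₁ hx₁ x₂ hx₂ x₃ hx₃ x₄ hx₄
  have hw₀ : ∀ f ∈ G.edgeSet, 0 ≤ w f := fun f hf => (hw f hf).le
  have h₁₂ := hX₁ x₁ hx₁ x₂ hx₂
  have h₃₄ := hX₂ x₃ hx₃ x₄ hx₄
  have h₁₃ := hsep x₁ hx₁ x₃ hx₃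
  have hsplit (f : Sym2 V) : treePathIndicator hG v x₁ f = treePathIndicator hG v x₂ f ∨
      treePathIndicator hG v x₃ f = treePathIndicator hG v x₄ f := by
    simp only [treePathIndicator_eq_iff]
    exact reachable_deleteEdges_or_reachable_deleteEdges h₁₂ h₃₄ h₁₃
  refine ⟨?_, ?_, hw e he⟩
  · rw [inner_sqrtEmbed_sub_sqrtEmbed hG hw₀]
    refine Finset.sum_eq_zero fun f _ => ?_
    rcases hsplit f with h | h <;> simp only [h, sub_self, mul_zero, zero_mul]
  · rw [inner_sqrtEmbed_sub_sqrtEmbed hG hw₀]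
    refine (le_of_eq ?_).trans <| Finset.single_le_sum
      (fun (f : G.edgeSet) _ =>
        mul_nonneg (hw₀ f f.2) (treePathIndicator_sub_mul_sub_nonneg hG (hsplit f)))
      (Finset.mem_univ ⟨e, he⟩)
    rw [treePathIndicator_sub_mul_sub_eq_one hG ((treePathIndicator_eq_iff ..).2 h₁₂)
      ((treePathIndicator_eq_iff ..).2 h₃₄) (mt (treePathIndicator_eq_iff ..).1 h₁₃), mul_one]

open RealInnerProductSpace in
/-- if `X₁ | X₂` is the bipartition of the leaves of `T` induced by deleting
the edge `e`, then for leaves `x₁, x₂ ∈ X₁` and `x₃, x₄ ∈ X₂` the within-split difference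
vectors are orthogonal, and the cross dot product is at least `w e > 0`. -/
theorem sqrtEmbed_split {V : Type*} [DecidableEq V] (G : SimpleGraph V) (hG : G.IsTree)
    [Fintype G.edgeSet] (w : Sym2 V → ℝ) (hw : ∀ e ∈ G.edgeSet, 0 < w e)
    (v : V) (e : Sym2 V) (he : e ∈ G.edgeSet) (X₁ X₂ : Set V)
    (hleaves : X₁ ∪ X₂ = {u : V | ∃! u' : V, G.Adj u u'})
    (hdisj : Disjoint X₁ X₂)
    (hX₁ : ∀ a ∈ X₁, ∀ b ∈ X₁, (G.deleteEdges {e}).Reachable a b)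
    (hX₂ : ∀ a ∈ X₂, ∀ b ∈ X₂, (G.deleteEdges {e}).Reachable a b)
    (hsep : ∀ a ∈ X₁, ∀ b ∈ X₂, ¬ (G.deleteEdges {e}).Reachable a b) :
    ∀ x₁ ∈ X₁, ∀ x₂ ∈ X₁, ∀ x₃ ∈ X₂, ∀ x₄ ∈ X₂,
      ⟪sqrtEmbed G hG w v x₁ - sqrtEmbed G hG w v x₂,
        sqrtEmbed G hG w v x₃ - sqrtEmbed G hG w v x₄⟫ = 0 ∧
      w e ≤ ⟪sqrtEmbed G hG w v x₁ - sqrtEmbed G hG w v x₃,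
              sqrtEmbed G hG w v x₂ - sqrtEmbed G hG w v x₄⟫ ∧
      0 < w e :=
  sqrtEmbed_split_general G hG w hw v e he X₁ X₂ hX₁ hX₂ hsep
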